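/- arXiv:1310.1027 — 5 statements merged into one kernel-verified Lean document; each statement's English description precedes it below -/
import Mathlib

section
/- Let t > 0, let μ be a Borel probability measure on [0,∞) with μ({0}) = 0, and let φ : (0,∞) → [0,∞) be a function such that ∫_{[0,∞)} e^{−λu} dμ(u) = e^{−t·φ(λ)} for every λ > 0. Then ∫_1^∞ μ((u,∞)) · u^{−1} du ≤ t · ∫_0^1 φ(λ) · λ^{−1} dλ + e^{−1}. -/
/-!
By Tonelli, `∫_1^∞ μ((u,∞)) du/u = ∫ log⁺ s dμ(s)`. For `s ≥ 1`,
`log s = ∫_{1/s}^1 dl/l ≤ ∫_0^1 (1 - e^{-ls})/l dl + ∫_{1/s}^∞ s e^{-ls} dl`, and the last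
integral is `e⁻¹`. Integrating in `μ` and swapping the integrals again leaves
`∫ (1 - e^{-ls}) dμ(s) = 1 - e^{-tφ(l)} ≤ tφ(l)` under the `dl/l` integral.
-/

open MeasureTheory Set Real

theorem lintegral_Ioo_ofReal_inv {a b : ℝ} (ha : 0 < a) (hab : a ≤ b) :
    ∫⁻ x in Ioo a b, ENNReal.ofReal x⁻¹ = ENNReal.ofReal (log (b / a)) := by
  have hzero : (0 : ℝ) ∉ uIcc a b := by
    rw [uIcc_of_le hab]; exact fun h => ha.not_ge h.1
  have hint : IntegrableOn (fun x : ℝ => x⁻¹) (Ioo a b) :=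
    (intervalIntegrable_iff_integrableOn_Ioo_of_le hab).mp
      (intervalIntegral.intervalIntegrable_inv (fun x hx h => hzero (h ▸ hx)) continuousOn_id)
  have hnonneg : 0 ≤ᵐ[volume.restrict (Ioo a b)] fun x : ℝ => x⁻¹ :=
    (ae_restrict_iff' measurableSet_Ioo).mpr
      (ae_of_all _ fun x hx => (inv_pos.mpr (ha.trans hx.1)).le)
  rw [← ofReal_integral_eq_lintegral_ofReal hint hnonneg, ← integral_Ioc_eq_integral_Ioo,
    ← intervalIntegral.integral_of_le hab, integral_inv hzero]

theorem lintegral_Ioi_ofReal_exp_mul {a : ℝ} (ha : a < 0) (c : ℝ) :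
    ∫⁻ x in Ioi c, ENNReal.ofReal (exp (a * x)) = ENNReal.ofReal (-exp (a * c) / a) := by
  rw [← ofReal_integral_eq_lintegral_ofReal (integrableOn_exp_mul_Ioi ha c)
    (ae_of_all _ fun x => (exp_pos _).le), integral_exp_mul_Ioi ha c]

theorem ofReal_log_le_lintegral_one_sub_exp_div_add {s : ℝ} (hs : 1 ≤ s) :
    ENNReal.ofReal (log s) ≤
      (∫⁻ l in Ioo 0 1, ENNReal.ofReal ((1 - exp (-(l * s))) / l)) +
        ENNReal.ofReal (exp (-1)) := by
  have hs0 : 0 < s := one_pos.trans_le hs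
  have hinv : 0 < s⁻¹ := inv_pos.mpr hs0
  have hinv1 : s⁻¹ ≤ 1 := inv_le_one_of_one_le₀ hs
  -- On `(1/s, 1)` we have `e^{-ls}/l ≤ s e^{-ls}`, whose integral is at most `e⁻¹`.
  have hpoint : ∀ l ∈ Ioo s⁻¹ 1, ENNReal.ofReal l⁻¹ ≤
      ENNReal.ofReal ((1 - exp (-(l * s))) / l) +
        ENNReal.ofReal s * ENNReal.ofReal (exp (-s * l)) := by
    intro l hl
    have hl0 : 0 < l := hinv.trans hl.1
    have hsl : 1 < s * l := by
      simpa [mul_inv_cancel₀ hs0.ne'] using mul_lt_mul_of_pos_left hl.1 hs0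
    have hsplit : l⁻¹ = (1 - exp (-(l * s))) / l + exp (-s * l) / l := by
      field_simp; ring_nf
    have htail : exp (-s * l) / l ≤ s * exp (-s * l) := by
      rw [div_le_iff₀ hl0]; nlinarith [exp_pos (-s * l)]
    rw [← ENNReal.ofReal_mul hs0.le]
    exact (ENNReal.ofReal_le_ofReal (by linarith)).trans ENNReal.ofReal_add_le
  calc ENNReal.ofReal (log s)
      = ∫⁻ l in Ioo s⁻¹ 1, ENNReal.ofReal l⁻¹ := by
        rw [lintegral_Ioo_ofReal_inv hinv hinv1, one_div, inv_inv]
    _ ≤ ∫⁻ l in Ioo s⁻¹ 1, (ENNReal.ofReal ((1 - exp (-(l * s))) / l) +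
          ENNReal.ofReal s * ENNReal.ofReal (exp (-s * l))) :=
        setLIntegral_mono' measurableSet_Ioo hpoint
    _ = (∫⁻ l in Ioo s⁻¹ 1, ENNReal.ofReal ((1 - exp (-(l * s))) / l)) +
          ENNReal.ofReal s * ∫⁻ l in Ioo s⁻¹ 1, ENNReal.ofReal (exp (-s * l)) := by
        rw [lintegral_add_right _ (by fun_prop), lintegral_const_mul _ (by fun_prop)]
    _ ≤ (∫⁻ l in Ioo 0 1, ENNReal.ofReal ((1 - exp (-(l * s))) / l)) +
          ENNReal.ofReal s * ∫⁻ l in Ioi s⁻¹, ENNReal.ofReal (exp (-s * l)) := by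
        gcongr
        exact Ioo_subset_Ioi_self
    _ = (∫⁻ l in Ioo 0 1, ENNReal.ofReal ((1 - exp (-(l * s))) / l)) +
          ENNReal.ofReal (exp (-1)) := by
        rw [lintegral_Ioi_ofReal_exp_mul (neg_neg_of_pos hs0), ← ENNReal.ofReal_mul hs0.le]
        congr 3
        field_simp

theorem lintegral_Ioi_one_measure_Ioi_div (μ : Measure ℝ) [SFinite μ] :
    ∫⁻ u in Ioi 1, μ (Ioi u) / ENNReal.ofReal u =
      ∫⁻ s in Ioi 1, ENNReal.ofReal (log s) ∂μ := by
  let F : ℝ × ℝ → ENNReal := {p | p.1 < p.2}.indicator fun p => ENNReal.ofReal p.1⁻¹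
  have hF : Measurable F :=
    (by fun_prop : Measurable fun p : ℝ × ℝ => ENNReal.ofReal p.1⁻¹).indicator
      (measurableSet_lt measurable_fst measurable_snd)
  have hu : ∀ u ∈ Ioi (1 : ℝ), μ (Ioi u) / ENNReal.ofReal u = ∫⁻ s, F (u, s) ∂μ := by
    intro u hu
    rw [show (fun s => F (u, s)) = (Ioi u).indicator fun _ => ENNReal.ofReal u⁻¹ from rfl,
      lintegral_indicator_const measurableSet_Ioi, ENNReal.ofReal_inv_of_pos (one_pos.trans hu),
      div_eq_mul_inv, mul_comm]
  have hs : ∀ s, ∫⁻ u in Ioi 1, F (u, s) =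
      (Ioi 1).indicator (fun s => ENNReal.ofReal (log s)) s := by
    intro s
    rw [show (fun u => F (u, s)) = (Iio s).indicator fun u => ENNReal.ofReal u⁻¹ from rfl,
      lintegral_indicator measurableSet_Iio, Measure.restrict_restrict measurableSet_Iio,
      Iio_inter_Ioi]
    rcases lt_or_ge 1 s with h1s | hs1
    · rw [indicator_of_mem (mem_Ioi.mpr h1s), lintegral_Ioo_ofReal_inv one_pos h1s.le, div_one]
    · rw [indicator_of_notMem (notMem_Ioi.mpr hs1), Ioo_eq_empty (not_lt.mpr hs1),
        Measure.restrict_empty, lintegral_zero_measure]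
  rw [setLIntegral_congr_fun measurableSet_Ioi hu,
    lintegral_lintegral_swap (f := fun u s => F (u, s)) hF.aemeasurable,
    ← lintegral_indicator measurableSet_Ioi]
  exact lintegral_congr hs

theorem lintegral_ofReal_one_sub_exp_div_le {μ : Measure ℝ} [IsProbabilityMeasure μ]
    (hμ : ∀ᵐ s ∂μ, 0 ≤ s) {l x : ℝ} (hl : 0 < l)
    (hx : ∫ s, exp (-(l * s)) ∂μ = exp (-x)) :
    ∫⁻ s, ENNReal.ofReal ((1 - exp (-(l * s))) / l) ∂μ ≤ ENNReal.ofReal (x / l) := by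
  have hle : ∀ᵐ s ∂μ, exp (-(l * s)) ≤ 1 := hμ.mono fun s hs =>
    exp_le_one_iff.mpr (neg_nonpos.mpr (mul_nonneg hl.le hs))
  have hint : Integrable (fun s => exp (-(l * s))) μ :=
    Integrable.of_bound (by fun_prop) 1
      (hle.mono fun s hs => by rwa [norm_of_nonneg (exp_pos _).le])
  have hnonneg : 0 ≤ᵐ[μ] fun s => (1 - exp (-(l * s))) / l :=
    hle.mono fun s hs => div_nonneg (sub_nonneg.mpr hs) hl.le
  have hint' : Integrable (fun s => (1 - exp (-(l * s))) / l) μ :=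
    ((integrable_const 1).sub hint).div_const l
  rw [← ofReal_integral_eq_lintegral_ofReal hint' hnonneg,
    integral_div, integral_sub (integrable_const 1) hint, hx, integral_const, probReal_univ,
    one_smul]
  gcongr
  linarith [add_one_le_exp (-x)]

theorem lintegral_lintegral_Ioo_one_sub_exp_div_le {μ : Measure ℝ} [IsProbabilityMeasure μ]
    (hμ : ∀ᵐ s ∂μ, 0 ≤ s) {ψ : ℝ → ℝ}
    (hψ : ∀ l, 0 < l → ∫ s, exp (-(l * s)) ∂μ = exp (-ψ l)) :
    ∫⁻ s, (∫⁻ l in Ioo 0 1, ENNReal.ofReal ((1 - exp (-(l * s))) / l)) ∂μ ≤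
      ∫⁻ l in Ioo 0 1, ENNReal.ofReal (ψ l / l) := by
  rw [lintegral_lintegral_swap (by fun_prop)]
  exact setLIntegral_mono' measurableSet_Ioo fun l hl =>
    lintegral_ofReal_one_sub_exp_div_le hμ hl.1 (hψ l hl.1)

theorem stmt0_general (t : ℝ) (ht : 0 < t) (μ : Measure ℝ) [IsProbabilityMeasure μ]
    (hsupp : μ (Set.Iio 0) = 0)
    (φ : ℝ → ℝ)
    (hlaplace : ∀ l, 0 < l →
      ∫ u in Set.Ici (0:ℝ), Real.exp (-(l * u)) ∂μ = Real.exp (-(t * φ l))) :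
    ∫⁻ u in Set.Ioi (1:ℝ), μ (Set.Ioi u) / ENNReal.ofReal u ≤
      ENNReal.ofReal t * (∫⁻ l in Set.Ioo (0:ℝ) 1, ENNReal.ofReal (φ l / l)) +
        ENNReal.ofReal (Real.exp (-1)) := by
  have hμ : ∀ᵐ s ∂μ, s ∈ Ici (0 : ℝ) := by
    rw [← compl_Iio]; exact compl_mem_ae_iff.mpr hsupp
  rw [Measure.restrict_eq_self_of_ae_mem hμ] at hlaplace
  set K : ℝ → ENNReal := fun s =>
    ∫⁻ l in Ioo 0 1, ENNReal.ofReal ((1 - exp (-(l * s))) / l)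
  calc ∫⁻ u in Ioi 1, μ (Ioi u) / ENNReal.ofReal u
      = ∫⁻ s in Ioi 1, ENNReal.ofReal (log s) ∂μ :=
        lintegral_Ioi_one_measure_Ioi_div μ
    _ ≤ ∫⁻ s in Ioi 1, (K s + ENNReal.ofReal (exp (-1))) ∂μ :=
        setLIntegral_mono' measurableSet_Ioi fun s hs =>
          ofReal_log_le_lintegral_one_sub_exp_div_add hs.le
    _ ≤ ∫⁻ s, (K s + ENNReal.ofReal (exp (-1))) ∂μ := setLIntegral_le_lintegral _ _
    _ = (∫⁻ s, K s ∂μ) + ENNReal.ofReal (exp (-1)) := by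
        rw [lintegral_add_right _ measurable_const, lintegral_const, measure_univ, mul_one]
    _ ≤ (∫⁻ l in Ioo 0 1, ENNReal.ofReal (t * φ l / l)) + ENNReal.ofReal (exp (-1)) := by
        gcongr ?_ + _
        exact lintegral_lintegral_Ioo_one_sub_exp_div_le (ψ := fun l => t * φ l) hμ hlaplace
    _ = _ := by
        simp_rw [mul_div_assoc, ENNReal.ofReal_mul ht.le]
        rw [lintegral_const_mul' _ _ ENNReal.ofReal_ne_top]

/-- Lemma 2.2 of the paper: if `μ` is the law of a subordinator at time `t > 0`
(a probability measure on `[0,∞)` not charging `{0}`) with Laplace exponent `φ`,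
then `∫_1^∞ μ((u,∞))/u du ≤ t ∫_0^1 φ(λ)/λ dλ + e⁻¹` (inequality in `[0,∞]`). -/
theorem stmt0 (t : ℝ) (ht : 0 < t) (μ : Measure ℝ) [IsProbabilityMeasure μ]
    (hsupp : μ (Set.Iio 0) = 0) (h0 : μ ({0} : Set ℝ) = 0)
    (φ : ℝ → ℝ) (hφ : ∀ l, 0 < l → 0 ≤ φ l)
    (hlaplace : ∀ l, 0 < l →
      ∫ u in Set.Ici (0:ℝ), Real.exp (-(l * u)) ∂μ = Real.exp (-(t * φ l))) :
    ∫⁻ u in Set.Ioi (1:ℝ), μ (Set.Ioi u) / ENNReal.ofReal u ≤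
      ENNReal.ofReal t * (∫⁻ l in Set.Ioo (0:ℝ) 1, ENNReal.ofReal (φ l / l)) +
        ENNReal.ofReal (Real.exp (-1)) :=
  stmt0_general t ht μ hsupp φ hlaplace
end

section
/- Let d_w > 1, c > 0 and a > 1, and let μ be a finite Borel measure on (0,∞) satisfying ∫_1^∞ μ((u,∞)) · u^{−1} du < ∞. Then ∑_{M=1}^∞ ∫_{(0,∞)} exp(−c · (a^M · u^{−1/d_w})^{d_w/(d_w−1)}) dμ(u) < ∞. -/
/-!
Split each integral at `u = ρ^(M+1)` with `ρ = a^(d_w/2)`. Below the threshold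
`a^(M+1) u^(-1/d_w) ≥ a^((M+1)/2)`, so with `p = d_w/(d_w-1)` and `s = a^(p/2) > 1` the integrand
is at most `exp(-c s^(M+1)) ≤ exp(-c(s-1))^(M+1)` by Bernoulli: a geometric series. Above it the
integrand is at most `1`, leaving `∑ μ(ρ^(M+1),∞)`; on the block `(ρ^M, ρ^(M+1)]` the function
`μ(u,∞)/u` is at least `μ(ρ^(M+1),∞)/ρ^(M+1)`, so this sum is at most
`(1-ρ⁻¹)⁻¹ ∫_1^∞ μ(u,∞) du/u`.
-/

open MeasureTheory Set Real
open scoped ENNReal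

lemma rpow_half_pow_le_pow_mul_rpow_neg_inv {a dw u : ℝ} (ha : 0 < a) (hdw : 0 < dw) (hu : 0 < u)
    {n : ℕ} (hun : u ≤ (a ^ (dw / 2)) ^ n) :
    (a ^ (1 / 2 : ℝ)) ^ n ≤ a ^ n * u ^ (-(1 / dw)) := by
  calc (a ^ (1 / 2 : ℝ)) ^ n = a ^ n * ((a ^ (dw / 2)) ^ n) ^ (-(1 / dw)) := by
        rw [← rpow_mul_natCast ha.le, ← rpow_mul_natCast ha.le, ← rpow_mul ha.le,
          ← rpow_natCast a n, ← rpow_add ha]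
        congr 1
        field_simp
        ring
    _ ≤ a ^ n * u ^ (-(1 / dw)) :=
        mul_le_mul_of_nonneg_left (rpow_le_rpow_of_nonpos hu hun (neg_nonpos.2 (by positivity)))
          (by positivity)

lemma exp_neg_mul_rpow_le_pow {a c dw p u : ℝ} (ha : 0 < a) (hc : 0 ≤ c) (hdw : 0 < dw)
    (hp : 0 ≤ p) (hu : 0 < u) {n : ℕ} (hun : u ≤ (a ^ (dw / 2)) ^ n) :
    exp (-c * (a ^ n * u ^ (-(1 / dw))) ^ p) ≤ exp (-c * (a ^ (p / 2) - 1)) ^ n := by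
  have hpow : (a ^ (p / 2)) ^ n ≤ (a ^ n * u ^ (-(1 / dw))) ^ p :=
    calc (a ^ (p / 2)) ^ n = ((a ^ (1 / 2 : ℝ)) ^ n) ^ p := by
          rw [← rpow_mul_natCast ha.le, ← rpow_mul_natCast ha.le, ← rpow_mul ha.le]
          ring_nf
      _ ≤ (a ^ n * u ^ (-(1 / dw))) ^ p :=
          rpow_le_rpow (by positivity) (rpow_half_pow_le_pow_mul_rpow_neg_inv ha hdw hu hun) hp
  have hbernoulli : n * (a ^ (p / 2) - 1) ≤ (a ^ (p / 2)) ^ n := by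
    have := one_add_mul_le_pow (a := a ^ (p / 2) - 1)
      (by linarith [rpow_pos_of_pos ha (p / 2)]) n
    rw [add_sub_cancel] at this
    linarith
  rw [← exp_nat_mul, exp_le_exp]
  nlinarith [mul_le_mul_of_nonneg_left (hbernoulli.trans hpow) hc]

lemma setLIntegral_le_mul_add_measure {α : Type*} [MeasurableSpace α] {μ : Measure α}
    {s t : Set α} (hs : MeasurableSet s) (ht : MeasurableSet t) {f : α → ℝ≥0∞} {ε : ℝ≥0∞}
    (hsmall : ∀ u ∈ s \ t, f u ≤ ε) (hone : ∀ u ∈ s, f u ≤ 1) :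
    ∫⁻ u in s, f u ∂μ ≤ ε * μ univ + μ t := by
  calc ∫⁻ u in s, f u ∂μ ≤ ∫⁻ u in s, ε + t.indicator 1 u ∂μ := by
        refine setLIntegral_mono' hs fun u hu => ?_
        by_cases hut : u ∈ t
        · simpa [hut] using (hone u hu).trans le_add_self
        · simpa [hut] using hsmall u ⟨hu, hut⟩
    _ = ε * μ s + μ (t ∩ s) := by
        rw [lintegral_add_left measurable_const, setLIntegral_const, lintegral_indicator_one ht,
          Measure.restrict_apply ht]
    _ ≤ ε * μ univ + μ t := by
        gcongr
        · exact subset_univ s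
        · exact inter_subset_left

lemma measure_Ioi_mul_le_setLIntegral_Ioc {μ : Measure ℝ} {x y : ℝ} (hx : 0 < x) (hxy : x ≤ y) :
    μ (Ioi y) * ENNReal.ofReal ((y - x) / y) ≤ ∫⁻ u in Ioc x y, μ (Ioi u) / ENNReal.ofReal u := by
  have hy : 0 < y := hx.trans_le hxy
  calc μ (Ioi y) * ENNReal.ofReal ((y - x) / y)
      = ∫⁻ _ in Ioc x y, μ (Ioi y) * ENNReal.ofReal y⁻¹ := by
        rw [setLIntegral_const, Real.volume_Ioc, mul_assoc, ← ENNReal.ofReal_mul (by positivity),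
          div_eq_inv_mul]
    _ ≤ ∫⁻ u in Ioc x y, μ (Ioi u) / ENNReal.ofReal u := by
        refine setLIntegral_mono' measurableSet_Ioc fun u ⟨hxu, huy⟩ => ?_
        have hu : 0 < u := hx.trans hxu
        rw [div_eq_mul_inv, ← ENNReal.ofReal_inv_of_pos hu]
        exact mul_le_mul' (measure_mono (Ioi_subset_Ioi huy))
          (ENNReal.ofReal_le_ofReal (inv_anti₀ hu huy))

lemma tsum_measure_Ioi_pow_succ_mul_le {μ : Measure ℝ} {ρ : ℝ} (hρ : 1 < ρ) :
    (∑' M : ℕ, μ (Ioi (ρ ^ (M + 1)))) * ENNReal.ofReal (1 - ρ⁻¹) ≤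
      ∫⁻ u in Ioi 1, μ (Ioi u) / ENNReal.ofReal u := by
  have hρ0 : 0 < ρ := one_pos.trans hρ
  have hblock (M : ℕ) : 1 - ρ⁻¹ = (ρ ^ (M + 1) - ρ ^ M) / ρ ^ (M + 1) := by
    field_simp
    ring
  rw [← ENNReal.tsum_mul_right]
  calc ∑' M : ℕ, μ (Ioi (ρ ^ (M + 1))) * ENNReal.ofReal (1 - ρ⁻¹)
      ≤ ∑' M : ℕ, ∫⁻ u in Ioc (ρ ^ M) (ρ ^ (M + 1)), μ (Ioi u) / ENNReal.ofReal u :=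
        ENNReal.tsum_le_tsum fun M => hblock M ▸
          measure_Ioi_mul_le_setLIntegral_Ioc (pow_pos hρ0 M) (pow_le_pow_right₀ hρ.le M.le_succ)
    _ = ∫⁻ u in ⋃ M : ℕ, Ioc (ρ ^ M) (ρ ^ (M + 1)), μ (Ioi u) / ENNReal.ofReal u :=
        (lintegral_iUnion (fun _ => measurableSet_Ioc)
          (pow_right_mono₀ hρ.le).pairwise_disjoint_on_Ioc_succ _).symm
    _ ≤ ∫⁻ u in Ioi 1, μ (Ioi u) / ENNReal.ofReal u :=
        lintegral_mono_set <| iUnion_subset fun M _ hu => (one_le_pow₀ hρ.le).trans_lt hu.1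

lemma tsum_measure_Ioi_pow_succ_lt_top {μ : Measure ℝ} {ρ : ℝ} (hρ : 1 < ρ)
    (htail : ∫⁻ u in Ioi 1, μ (Ioi u) / ENNReal.ofReal u < ⊤) :
    ∑' M : ℕ, μ (Ioi (ρ ^ (M + 1))) < ⊤ := by
  have hK : ENNReal.ofReal (1 - ρ⁻¹) ≠ 0 := by
    simpa using inv_lt_one_of_one_lt₀ hρ
  refine lt_of_le_of_lt ?_ (ENNReal.div_lt_top htail.ne hK)
  exact (ENNReal.le_div_iff_mul_le (Or.inl hK) (Or.inl ENNReal.ofReal_ne_top)).2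
    (tsum_measure_Ioi_pow_succ_mul_le hρ)

theorem stmt6_general (dw : ℝ) (hdw : 1 < dw) (c a : ℝ) (hc : 0 < c) (ha : 1 < a)
    (μ : Measure ℝ) [IsFiniteMeasure μ]
    (htail : ∫⁻ u in Set.Ioi (1:ℝ), μ (Set.Ioi u) / ENNReal.ofReal u < ⊤) :
    (∑' M : ℕ, ∫⁻ u in Set.Ioi (0:ℝ),
        ENNReal.ofReal (Real.exp (-c * (a ^ (M + 1) * u ^ (-(1/dw))) ^ (dw/(dw-1)))) ∂μ) < ⊤ := by
  have ha0 : 0 < a := one_pos.trans ha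
  have hp : 0 < dw / (dw - 1) := div_pos (by linarith) (by linarith)
  set ρ := a ^ (dw / 2)
  set q := ENNReal.ofReal (exp (-c * (a ^ (dw / (dw - 1) / 2) - 1)))
  have hρ : 1 < ρ := one_lt_rpow ha (by linarith)
  have hq : q < 1 := ENNReal.ofReal_lt_one.2 <| exp_lt_one_iff.2 <| by
    nlinarith [one_lt_rpow ha (half_pos hp)]
  have hterm (M : ℕ) : ∫⁻ u in Ioi 0,
      ENNReal.ofReal (exp (-c * (a ^ (M + 1) * u ^ (-(1 / dw))) ^ (dw / (dw - 1)))) ∂μ ≤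
        q ^ (M + 1) * μ univ + μ (Ioi (ρ ^ (M + 1))) := by
    refine setLIntegral_le_mul_add_measure measurableSet_Ioi measurableSet_Ioi ?_ ?_
    · rintro u ⟨hu, hu'⟩
      rw [← ENNReal.ofReal_pow (exp_pos _).le]
      exact ENNReal.ofReal_le_ofReal <|
        exp_neg_mul_rpow_le_pow ha0 hc.le (by linarith) hp.le hu (not_lt.1 hu')
    · intro u hu
      refine ENNReal.ofReal_le_one.2 (exp_le_one_iff.2 ?_)
      have : 0 ≤ (a ^ (M + 1) * u ^ (-(1 / dw))) ^ (dw / (dw - 1)) := by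
        have hu0 : 0 ≤ u := le_of_lt hu
        positivity
      nlinarith
  have hgeom : ∑' M : ℕ, q ^ (M + 1) * μ univ < ⊤ := by
    rw [ENNReal.tsum_mul_right, ENNReal.tsum_geometric_add_one]
    exact ENNReal.mul_lt_top (ENNReal.mul_lt_top (hq.trans ENNReal.one_lt_top)
      (ENNReal.inv_lt_top.2 (tsub_pos_of_lt hq))) (measure_lt_top μ _)
  calc _ ≤ ∑' M : ℕ, (q ^ (M + 1) * μ univ + μ (Ioi (ρ ^ (M + 1)))) := ENNReal.tsum_le_tsum hterm
    _ = ∑' M : ℕ, q ^ (M + 1) * μ univ + ∑' M : ℕ, μ (Ioi (ρ ^ (M + 1))) := ENNReal.tsum_add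
    _ < ⊤ := ENNReal.add_lt_top.2 ⟨hgeom, tsum_measure_Ioi_pow_succ_lt_top hρ htail⟩

/-- The analytic content of Lemma 2.4 of the paper: for `d_w > 1`, `c > 0`, `a > 1` and a finite
Borel measure `μ` on `(0,∞)` with `∫_1^∞ μ((u,∞))/u du < ∞`, the series
`∑_{M≥1} ∫_{(0,∞)} exp(-c (a^M u^{-1/d_w})^{d_w/(d_w-1)}) dμ(u)` converges. -/
theorem stmt6 (dw : ℝ) (hdw : 1 < dw) (c a : ℝ) (hc : 0 < c) (ha : 1 < a)
    (μ : Measure ℝ) [IsFiniteMeasure μ] (hsupp : μ (Set.Iic 0) = 0)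
    (htail : ∫⁻ u in Set.Ioi (1:ℝ), μ (Set.Ioi u) / ENNReal.ofReal u < ⊤) :
    (∑' M : ℕ, ∫⁻ u in Set.Ioi (0:ℝ),
        ENNReal.ofReal (Real.exp (-c * (a ^ (M + 1) * u ^ (-(1/dw))) ^ (dw/(dw-1)))) ∂μ) < ⊤ :=
  stmt6_general dw hdw c a hc ha μ htail
end

section
/- Let d_w = log 5 / log 2, d_s = 2 · log 3 / log 5 and c > 0. Let μ be a Borel measure on (0,∞) satisfying ∫_{(0,∞)} u^{−d_s/2} dμ(u) < ∞ and ∫_1^∞ μ((x,∞)) · x^{−1} dx < ∞. Then ∫_{8/9}^∞ ( ∫_{(0,∞)} exp(−c · (x · u^{−1/d_w})^{d_w/(d_w−1)}) · u^{−d_s/2} dμ(u) ) x^{−1} dx < ∞. -/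
/-!
Swap the integrals by Tonelli (`μ` is s-finite on `(0, ∞)` because the positive function
`u ^ (-p)` is `μ`-integrable there). For fixed `u`, with `β = u ^ (-α)`, the integral
`∫_a^∞ exp (-c (x β) ^ γ) dx / x` is at most `log (1 / (a β)) + 1 / c`: bound the integrand
by `1 / x` up to `β⁻¹` and by `β exp (-c β x)` beyond. After multiplying by `u ^ (-p)`, the
constant part is integrable by the first hypothesis, while `u ^ (-p) α log u ≤ α log⁺ u`, whose
`μ`-integral equals `∫_1^∞ μ (x, ∞) dx / x` by the layer-cake formula.
-/

open MeasureTheory Set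
open scoped ENNReal

lemma sFinite_of_lintegral_ne_top {α : Type*} [MeasurableSpace α] {μ : Measure α}
    {f : α → ℝ≥0∞} (hf : AEMeasurable f μ) (hf₀ : ∀ᵐ x ∂μ, f x ≠ 0)
    (hfin : ∫⁻ x, f x ∂μ ≠ ∞) : SFinite μ :=
  have : IsFiniteMeasure (μ.withDensity f) := isFiniteMeasure_withDensity hfin
  sFinite_of_absolutelyContinuous (withDensity_absolutelyContinuous' hf hf₀)

lemma lintegral_Ioc_inv {a b : ℝ} (ha : 0 < a) (hb : 0 < b) :
    ∫⁻ x in Ioc a b, ENNReal.ofReal x⁻¹ = ENNReal.ofReal (Real.log (b / a)) := by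
  rcases lt_or_ge b a with hba | hab
  · rw [Ioc_eq_empty (lt_asymm hba), Measure.restrict_empty, lintegral_zero_measure,
      ENNReal.ofReal_of_nonpos (Real.log_nonpos (by positivity) ((div_le_one ha).2 hba.le))]
  have hint : IntegrableOn (fun x : ℝ => x⁻¹) (Ioc a b) :=
    (intervalIntegral.intervalIntegrable_inv
      (fun x hx => ((uIcc_of_le hab ▸ hx).1.trans_lt' ha).ne') continuousOn_id).1
  have hnonneg : 0 ≤ᵐ[volume.restrict (Ioc a b)] fun x : ℝ => x⁻¹ :=
    (ae_restrict_iff' measurableSet_Ioc).2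
      (ae_of_all _ fun x hx => inv_nonneg.2 (ha.trans hx.1).le)
  rw [← ofReal_integral_eq_lintegral_ofReal hint hnonneg, ← intervalIntegral.integral_of_le hab,
    integral_inv_of_pos ha hb]

lemma lintegral_Ioi_exp_neg_mul_le {r s : ℝ} (hr : 0 < r) (hs : 0 ≤ s) :
    ∫⁻ x in Ioi s, ENNReal.ofReal (Real.exp (-(r * x))) ≤ ENNReal.ofReal r⁻¹ := by
  have hint : IntegrableOn (fun x : ℝ => Real.exp (-(r * x))) (Ioi s) := by
    simpa only [neg_mul] using exp_neg_integrableOn_Ioi s hr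
  have hval : ∫ x in Ioi s, Real.exp (-(r * x)) = r⁻¹ * Real.exp (-(r * s)) := by
    simpa [integral_exp_Iic] using
      integral_comp_mul_left_Ioi (fun y => Real.exp (-y)) s hr
  rw [← ofReal_integral_eq_lintegral_ofReal hint (ae_of_all _ fun x => (Real.exp_pos _).le), hval]
  refine ENNReal.ofReal_le_ofReal (mul_le_of_le_one_right (inv_nonneg.2 hr.le) ?_)
  exact Real.exp_le_one_iff.2 (neg_nonpos.2 (mul_nonneg hr.le hs))

lemma lintegral_Ioi_exp_neg_rpow_div_le {a β γ c : ℝ} (ha : 0 < a) (hβ : 0 < β) (hγ : 1 ≤ γ)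
    (hc : 0 < c) :
    ∫⁻ x in Ioi a, ENNReal.ofReal (Real.exp (-c * (x * β) ^ γ) / x)
      ≤ ENNReal.ofReal (-Real.log (a * β)) + ENNReal.ofReal c⁻¹ := by
  have hcover : Ioi a ⊆ Ioc a β⁻¹ ∪ Ioi β⁻¹ := fun x hx => by
    rcases le_or_gt x β⁻¹ with h | h
    exacts [Or.inl ⟨hx, h⟩, Or.inr h]
  have hnear : ∫⁻ x in Ioc a β⁻¹, ENNReal.ofReal (Real.exp (-c * (x * β) ^ γ) / x)
      ≤ ENNReal.ofReal (-Real.log (a * β)) := by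
    calc _ ≤ ∫⁻ x in Ioc a β⁻¹, ENNReal.ofReal x⁻¹ := by
          refine setLIntegral_mono' measurableSet_Ioc fun x hx => ENNReal.ofReal_le_ofReal ?_
          have hx₀ : 0 < x := ha.trans hx.1
          rw [div_eq_mul_inv]
          refine mul_le_of_le_one_left (inv_nonneg.2 hx₀.le) (Real.exp_le_one_iff.2 ?_)
          have := Real.rpow_nonneg (mul_nonneg hx₀.le hβ.le) γ
          nlinarith
      _ = ENNReal.ofReal (-Real.log (a * β)) := by
          rw [lintegral_Ioc_inv ha (inv_pos.2 hβ), ← Real.log_inv, div_eq_mul_inv, mul_inv,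
            mul_comm]
  -- beyond `β⁻¹` we have `x * β ≥ 1`, so `(x * β) ^ γ ≥ x * β` and `1 / x ≤ β`
  have hfar : ∫⁻ x in Ioi β⁻¹, ENNReal.ofReal (Real.exp (-c * (x * β) ^ γ) / x)
      ≤ ENNReal.ofReal c⁻¹ := by
    calc _ ≤ ∫⁻ x in Ioi β⁻¹, ENNReal.ofReal β * ENNReal.ofReal (Real.exp (-(c * β * x))) := by
          refine setLIntegral_mono' measurableSet_Ioi fun x hx => ?_
          have hx₀ : 0 < x := (inv_pos.2 hβ).trans hx
          have hxβ : 1 < x * β := by rw [mem_Ioi, inv_lt_iff_one_lt_mul₀ hβ] at hx; linarith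
          rw [← ENNReal.ofReal_mul hβ.le]
          refine ENNReal.ofReal_le_ofReal ?_
          rw [div_le_iff₀ hx₀]
          have hpow : x * β ≤ (x * β) ^ γ := Real.self_le_rpow_of_one_le hxβ.le hγ
          calc Real.exp (-c * (x * β) ^ γ) ≤ Real.exp (-(c * β * x)) := by
                gcongr
                nlinarith
            _ ≤ β * Real.exp (-(c * β * x)) * x := by
                nlinarith [Real.exp_pos (-(c * β * x))]
      _ = ENNReal.ofReal β * ∫⁻ x in Ioi β⁻¹, ENNReal.ofReal (Real.exp (-(c * β * x))) :=
          lintegral_const_mul' _ _ ENNReal.ofReal_ne_top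
      _ ≤ ENNReal.ofReal β * ENNReal.ofReal (c * β)⁻¹ :=
          mul_le_mul_right (lintegral_Ioi_exp_neg_mul_le (by positivity) (by positivity)) _
      _ = ENNReal.ofReal c⁻¹ := by
          rw [← ENNReal.ofReal_mul hβ.le]
          field_simp
  calc _ ≤ ∫⁻ x in Ioc a β⁻¹ ∪ Ioi β⁻¹, ENNReal.ofReal (Real.exp (-c * (x * β) ^ γ) / x) :=
        lintegral_mono_set hcover
    _ ≤ _ := (lintegral_union_le _ _ _).trans (add_le_add hnear hfar)

lemma setLIntegral_ofReal_log_eq_lintegral_meas_Ioi_div {μ : Measure ℝ} [SFinite μ] :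
    ∫⁻ u in Ioi 0, ENNReal.ofReal (Real.log u) ∂μ
      = ∫⁻ x in Ioi 1, μ (Ioi x) / ENNReal.ofReal x := by
  let f : ℝ → ℝ → ℝ≥0∞ := fun x u => (Ioi x).indicator (fun _ => ENNReal.ofReal x⁻¹) u
  have hf : Measurable (Function.uncurry f) := by
    refine Measurable.ite (measurableSet_lt measurable_fst measurable_snd) ?_ measurable_const
    exact measurable_fst.inv.ennreal_ofReal
  have hlog : ∀ u ∈ Ioi (0 : ℝ), ENNReal.ofReal (Real.log u) = ∫⁻ x in Ioi 1, f x u := by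
    intro u hu
    have hf_u : ∀ x, f x u = (Iio u).indicator (fun x => ENNReal.ofReal x⁻¹) x := fun x => by
      simp only [f, indicator_apply, mem_Ioi, mem_Iio]
    rw [lintegral_congr hf_u, lintegral_indicator measurableSet_Iio,
      Measure.restrict_restrict measurableSet_Iio, Iio_inter_Ioi, setLIntegral_congr Ioo_ae_eq_Ioc,
      lintegral_Ioc_inv one_pos hu, div_one]
  have htail : ∀ x ∈ Ioi (1 : ℝ), ∫⁻ u in Ioi 0, f x u ∂μ = μ (Ioi x) / ENNReal.ofReal x := by
    intro x hx
    rw [lintegral_indicator_const measurableSet_Ioi, Measure.restrict_apply measurableSet_Ioi,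
      Ioi_inter_Ioi, max_eq_left (zero_le_one.trans hx.le), mul_comm, div_eq_mul_inv,
      ENNReal.ofReal_inv_of_pos (zero_lt_one.trans hx)]
  calc _ = ∫⁻ u in Ioi 0, (∫⁻ x in Ioi 1, f x u) ∂μ :=
        setLIntegral_congr_fun measurableSet_Ioi hlog
    _ = ∫⁻ x in Ioi 1, ∫⁻ u in Ioi 0, f x u ∂μ := (lintegral_lintegral_swap hf.aemeasurable).symm
    _ = _ := setLIntegral_congr_fun measurableSet_Ioi htail

lemma rpow_neg_mul_log_le {u p α : ℝ} (hu : 0 < u) (hp : 0 ≤ p) (hα : 0 ≤ α) :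
    u ^ (-p) * (α * Real.log u) ≤ α * Real.log u := by
  rcases le_total u 1 with hu1 | hu1
  · have hlog : α * Real.log u ≤ 0 :=
      mul_nonpos_of_nonneg_of_nonpos hα (Real.log_nonpos hu.le hu1)
    have hpow : 1 ≤ u ^ (-p) :=
      Real.one_le_rpow_of_pos_of_le_one_of_nonpos hu hu1 (neg_nonpos.2 hp)
    nlinarith
  · have hlog : 0 ≤ α * Real.log u := mul_nonneg hα (Real.log_nonneg hu1)
    exact mul_le_of_le_one_left hlog (Real.rpow_le_one_of_one_le_of_nonpos hu1 (neg_nonpos.2 hp))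

lemma lintegral_Ioi_exp_neg_rpow_mul_rpow_div_le {a α γ c p u : ℝ} (ha : 0 < a) (hα : 0 ≤ α)
    (hγ : 1 ≤ γ) (hc : 0 < c) (hp : 0 ≤ p) (hu : 0 < u) :
    ∫⁻ x in Ioi a,
        ENNReal.ofReal (Real.exp (-c * (x * u ^ (-α)) ^ γ) * u ^ (-p)) / ENNReal.ofReal x
      ≤ ENNReal.ofReal α * ENNReal.ofReal (Real.log u)
        + (ENNReal.ofReal (-Real.log a) + ENNReal.ofReal c⁻¹) * ENNReal.ofReal (u ^ (-p)) := by
  have hβ : 0 < u ^ (-α) := Real.rpow_pos_of_pos hu _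
  have hw : 0 ≤ u ^ (-p) := (Real.rpow_pos_of_pos hu _).le
  have hlog : -Real.log (a * u ^ (-α)) = α * Real.log u + -Real.log a := by
    rw [Real.log_mul ha.ne' hβ.ne', Real.log_rpow hu]
    ring
  calc _ = ENNReal.ofReal (u ^ (-p))
        * ∫⁻ x in Ioi a, ENNReal.ofReal (Real.exp (-c * (x * u ^ (-α)) ^ γ) / x) := by
        rw [← lintegral_const_mul' _ _ ENNReal.ofReal_ne_top]
        refine setLIntegral_congr_fun measurableSet_Ioi fun x hx => ?_
        rw [← ENNReal.ofReal_div_of_pos (ha.trans hx), ← ENNReal.ofReal_mul hw]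
        ring_nf
    _ ≤ ENNReal.ofReal (u ^ (-p)) * (ENNReal.ofReal (α * Real.log u)
          + ENNReal.ofReal (-Real.log a) + ENNReal.ofReal c⁻¹) := by
        gcongr
        refine (lintegral_Ioi_exp_neg_rpow_div_le ha hβ hγ hc).trans ?_
        rw [hlog]
        gcongr
        exact ENNReal.ofReal_add_le
    _ = ENNReal.ofReal (u ^ (-p) * (α * Real.log u))
        + (ENNReal.ofReal (-Real.log a) + ENNReal.ofReal c⁻¹) * ENNReal.ofReal (u ^ (-p)) := by
        rw [ENNReal.ofReal_mul hw]
        ring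
    _ ≤ _ := by
        rw [← ENNReal.ofReal_mul hα]
        exact add_le_add_left (ENNReal.ofReal_le_ofReal (rpow_neg_mul_log_le hu hp hα)) _

theorem lintegral_Ioi_div_lintegral_exp_neg_rpow_lt_top {μ : Measure ℝ} {a α γ c p : ℝ}
    (ha : 0 < a) (hα : 0 ≤ α) (hγ : 1 ≤ γ) (hc : 0 < c) (hp : 0 ≤ p)
    (h1 : ∫⁻ u in Ioi 0, ENNReal.ofReal (u ^ (-p)) ∂μ < ⊤)
    (h2 : ∫⁻ x in Ioi 1, μ (Ioi x) / ENNReal.ofReal x < ⊤) :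
    ∫⁻ x in Ioi a,
      (∫⁻ u in Ioi 0, ENNReal.ofReal (Real.exp (-c * (x * u ^ (-α)) ^ γ) * u ^ (-p)) ∂μ)
        / ENNReal.ofReal x < ⊤ := by
  have : SFinite (μ.restrict (Ioi 0)) :=
    sFinite_of_lintegral_ne_top (by fun_prop)
      ((ae_restrict_iff' measurableSet_Ioi).2 (ae_of_all _ fun u hu =>
        (ENNReal.ofReal_pos.2 (Real.rpow_pos_of_pos hu _)).ne')) h1.ne
  have hlog : ∫⁻ u in Ioi 0, ENNReal.ofReal (Real.log u) ∂μ < ⊤ := calc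
    _ = ∫⁻ u in Ioi 0, ENNReal.ofReal (Real.log u) ∂μ.restrict (Ioi 0) := by
        rw [Measure.restrict_restrict_of_subset subset_rfl]
    _ = ∫⁻ x in Ioi 1, μ.restrict (Ioi 0) (Ioi x) / ENNReal.ofReal x :=
        setLIntegral_ofReal_log_eq_lintegral_meas_Ioi_div
    _ ≤ ∫⁻ x in Ioi 1, μ (Ioi x) / ENNReal.ofReal x :=
        lintegral_mono fun x => ENNReal.div_le_div_right (Measure.restrict_apply_le _ _) _
    _ < ⊤ := h2
  let F : ℝ → ℝ → ℝ≥0∞ := fun x u =>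
    ENNReal.ofReal (Real.exp (-c * (x * u ^ (-α)) ^ γ) * u ^ (-p)) / ENNReal.ofReal x
  have hF : Measurable (Function.uncurry F) := by fun_prop
  calc _ = ∫⁻ x in Ioi a, ∫⁻ u in Ioi 0, F x u ∂μ := by
        refine lintegral_congr fun x => ?_
        simp_rw [F, div_eq_mul_inv]
        exact (lintegral_mul_const _ (by fun_prop)).symm
    _ = ∫⁻ u in Ioi 0, (∫⁻ x in Ioi a, F x u) ∂μ := lintegral_lintegral_swap hF.aemeasurable
    _ ≤ ∫⁻ u in Ioi 0, (ENNReal.ofReal α * ENNReal.ofReal (Real.log u)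
          + (ENNReal.ofReal (-Real.log a) + ENNReal.ofReal c⁻¹) * ENNReal.ofReal (u ^ (-p))) ∂μ :=
        setLIntegral_mono' measurableSet_Ioi fun u hu =>
          lintegral_Ioi_exp_neg_rpow_mul_rpow_div_le ha hα hγ hc hp hu
    _ = ENNReal.ofReal α * ∫⁻ u in Ioi 0, ENNReal.ofReal (Real.log u) ∂μ
          + (ENNReal.ofReal (-Real.log a) + ENNReal.ofReal c⁻¹)
            * ∫⁻ u in Ioi 0, ENNReal.ofReal (u ^ (-p)) ∂μ := by
        rw [lintegral_add_left (by fun_prop), lintegral_const_mul _ (by fun_prop),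
          lintegral_const_mul _ (by fun_prop)]
    _ < ⊤ := by finiteness

theorem stmt9_general (dw ds : ℝ) (hdw : dw = Real.log 5 / Real.log 2)
    (hds : ds = 2 * Real.log 3 / Real.log 5)
    (c : ℝ) (hc : 0 < c) (μ : Measure ℝ)
    (h1 : ∫⁻ u in Set.Ioi (0:ℝ), ENNReal.ofReal (u ^ (-(ds/2))) ∂μ < ⊤)
    (h2 : ∫⁻ x in Set.Ioi (1:ℝ), μ (Set.Ioi x) / ENNReal.ofReal x < ⊤) :
    ∫⁻ x in Set.Ioi ((8:ℝ)/9),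
      (∫⁻ u in Set.Ioi (0:ℝ),
          ENNReal.ofReal (Real.exp (-c * (x * u ^ (-(1/dw))) ^ (dw/(dw-1))) * u ^ (-(ds/2))) ∂μ)
        / ENNReal.ofReal x < ⊤ := by
  have hdw₁ : 1 < dw := by
    rw [hdw, one_lt_div (Real.log_pos one_lt_two)]
    exact Real.log_lt_log two_pos (by norm_num)
  have hds₀ : 0 ≤ ds := by
    rw [hds]
    positivity
  exact lintegral_Ioi_div_lintegral_exp_neg_rpow_lt_top (by norm_num) (by positivity)
    ((one_le_div (by linarith)).2 (by linarith)) hc (by positivity) h1 h2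

/-- The concluding estimate in the proof of Lemma 2.6 of the paper: with
`d_w = log 5 / log 2`, `d_s = 2 log 3 / log 5`, `c > 0` and a Borel measure `μ` on `(0,∞)`
satisfying `∫ u^{-d_s/2} dμ(u) < ∞` and `∫_1^∞ μ((x,∞))/x dx < ∞`, the double integral
`∫_{8/9}^∞ (∫_{(0,∞)} exp(-c (x u^{-1/d_w})^{d_w/(d_w-1)}) u^{-d_s/2} dμ(u)) x⁻¹ dx` is finite. -/
theorem stmt9 (dw ds : ℝ) (hdw : dw = Real.log 5 / Real.log 2)
    (hds : ds = 2 * Real.log 3 / Real.log 5)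
    (c : ℝ) (hc : 0 < c) (μ : Measure ℝ) (hsupp : μ (Set.Iic 0) = 0)
    (h1 : ∫⁻ u in Set.Ioi (0:ℝ), ENNReal.ofReal (u ^ (-(ds/2))) ∂μ < ⊤)
    (h2 : ∫⁻ x in Set.Ioi (1:ℝ), μ (Set.Ioi x) / ENNReal.ofReal x < ⊤) :
    ∫⁻ x in Set.Ioi ((8:ℝ)/9),
      (∫⁻ u in Set.Ioi (0:ℝ),
          ENNReal.ofReal (Real.exp (-c * (x * u ^ (-(1/dw))) ^ (dw/(dw-1))) * u ^ (-(ds/2))) ∂μ)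
        / ENNReal.ofReal x < ⊤ :=
  stmt9_general dw ds hdw hds c hc μ h1 h2
end

section
/- For every δ > 0 and c > 0 there exists a constant C > 0 such that for every s > 0: ∑_{M=0}^∞ exp(−c · (2^{M+1} / ((M+1)² · s))^δ) ≤ 3 + C · ∫_{8/9}^∞ exp(−c · (x/s)^δ) · x^{−1} dx. -/
/-!
The `M`-th term is `φ(x_{M+1})`, where `φ(x) = exp (-c (x/s)^δ)` is decreasing and
`x_N = 2^N / N²`. From `N = 3` on, `x_{N+1} ≥ (9/8) x_N`, so
`log (9/8) φ(x_{N+1}) ≤ ∫_{x_N}^{x_{N+1}} φ(x) dx/x`, and these intervals are disjoint subsets of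
`(x_3, ∞) = (8/9, ∞)`. The terms with `M ≤ 2` are at most `1` each.
-/

open MeasureTheory Set
open scoped ENNReal

lemma setLIntegral_Ioc_ofReal_inv {a b : ℝ} (ha : 0 < a) (hab : a ≤ b) :
    ∫⁻ t in Ioc a b, ENNReal.ofReal t⁻¹ = ENNReal.ofReal (Real.log (b / a)) := by
  have hinv : IntegrableOn (fun t : ℝ => t⁻¹) (Ioc a b) :=
    (continuousOn_inv₀.mono fun t ht => (ha.trans_le ht.1).ne').integrableOn_Icc.mono_set
      Ioc_subset_Icc_self
  rw [← ofReal_integral_eq_lintegral_ofReal hinv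
    (ae_restrict_of_forall_mem measurableSet_Ioc fun t ht => inv_nonneg.mpr (ha.trans ht.1).le),
    ← intervalIntegral.integral_of_le hab, integral_inv_of_pos ha (ha.trans_le hab)]

lemma mul_ofReal_log_div_le_setLIntegral_Ioc {f : ℝ → ℝ≥0∞} (hf : AntitoneOn f (Ioi 0))
    {a b : ℝ} (ha : 0 < a) (hab : a ≤ b) :
    f b * ENNReal.ofReal (Real.log (b / a)) ≤ ∫⁻ t in Ioc a b, f t * ENNReal.ofReal t⁻¹ := by
  rw [← setLIntegral_Ioc_ofReal_inv ha hab, ← lintegral_const_mul _ measurable_inv.ennreal_ofReal]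
  refine setLIntegral_mono' measurableSet_Ioc fun t ht => ?_
  gcongr
  exact hf (ha.trans ht.1) (ha.trans_le hab) ht.2

theorem ofReal_log_mul_tsum_le_setLIntegral_Ioi {f : ℝ → ℝ≥0∞} (hf : AntitoneOn f (Ioi 0))
    {x : ℕ → ℝ} {q : ℝ} (hx₀ : 0 < x 0) (hq : 1 ≤ q) (hx : ∀ n, q * x n ≤ x (n + 1)) :
    ENNReal.ofReal (Real.log q) * ∑' n, f (x (n + 1)) ≤
      ∫⁻ t in Ioi (x 0), f t * ENNReal.ofReal t⁻¹ := by
  have hpos : ∀ n, 0 < x n := by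
    intro n
    induction n with
    | zero => exact hx₀
    | succ n ih => exact ih.trans_le ((le_mul_of_one_le_left ih.le hq).trans (hx n))
  have hmono : Monotone x :=
    monotone_nat_of_le_succ fun n => (le_mul_of_one_le_left (hpos n).le hq).trans (hx n)
  have hterm : ∀ n, ENNReal.ofReal (Real.log q) * f (x (n + 1)) ≤
      ∫⁻ t in Ioc (x n) (x (n + 1)), f t * ENNReal.ofReal t⁻¹ := by
    intro n
    refine le_trans ?_ (mul_ofReal_log_div_le_setLIntegral_Ioc hf (hpos n) (hmono n.le_succ))
    rw [mul_comm]
    gcongr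
    exact (le_div_iff₀ (hpos n)).mpr (hx n)
  calc ENNReal.ofReal (Real.log q) * ∑' n, f (x (n + 1))
      ≤ ∑' n, ∫⁻ t in Ioc (x n) (x (n + 1)), f t * ENNReal.ofReal t⁻¹ := by
        rw [← ENNReal.tsum_mul_left]
        exact ENNReal.tsum_le_tsum hterm
    _ = ∫⁻ t in ⋃ n, Ioc (x n) (x (n + 1)), f t * ENNReal.ofReal t⁻¹ :=
        (lintegral_iUnion (fun _ => measurableSet_Ioc) hmono.pairwise_disjoint_on_Ioc_succ _).symm
    _ ≤ ∫⁻ t in Ioi (x 0), f t * ENNReal.ofReal t⁻¹ :=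
        lintegral_mono_set (iUnion_subset fun n t ht => (hmono n.zero_le).trans_lt ht.1)

noncomputable def twoPowDivSq (n : ℕ) : ℝ := 2 ^ n / (n : ℝ) ^ 2

lemma twoPowDivSq_nonneg (n : ℕ) : 0 ≤ twoPowDivSq n := by
  unfold twoPowDivSq
  positivity

lemma nine_div_eight_mul_twoPowDivSq_le {n : ℕ} (hn : 3 ≤ n) :
    9 / 8 * twoPowDivSq n ≤ twoPowDivSq (n + 1) := by
  have hn' : (3 : ℝ) ≤ n := by exact_mod_cast hn
  rw [twoPowDivSq, twoPowDivSq, mul_div_assoc', div_le_div_iff₀ (by positivity) (by positivity),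
    pow_succ (2 : ℝ) n]
  push_cast
  have : (0 : ℝ) ≤ 2 ^ n := by positivity
  nlinarith [mul_le_mul_of_nonneg_left (by nlinarith : 9 * ((n : ℝ) + 1) ^ 2 ≤ 16 * n ^ 2) this]

lemma antitoneOn_exp_neg_mul_div_rpow {c s δ : ℝ} (hc : 0 ≤ c) (hs : 0 ≤ s) (hδ : 0 ≤ δ) :
    AntitoneOn (fun t => Real.exp (-c * (t / s) ^ δ)) (Ioi 0) := by
  intro t ht u _ htu
  simp only [neg_mul, Real.exp_le_exp, neg_le_neg_iff]
  gcongr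
  exact div_nonneg (le_of_lt ht) hs

lemma ofReal_exp_neg_mul_rpow_le_one {c y : ℝ} (δ : ℝ) (hc : 0 ≤ c) (hy : 0 ≤ y) :
    ENNReal.ofReal (Real.exp (-c * y ^ δ)) ≤ 1 := by
  refine ENNReal.ofReal_le_one.mpr (Real.exp_le_one_iff.mpr ?_)
  rw [neg_mul, neg_nonpos]
  exact mul_nonneg hc (Real.rpow_nonneg hy δ)

/-- The sum–integral comparison proved inside Lemma 2.6 of the paper: for every `δ, c > 0`
there is `C > 0` such that for every `s > 0`,
`∑_{M=0}^∞ exp(-c (2^{M+1}/((M+1)² s))^δ) ≤ 3 + C ∫_{8/9}^∞ exp(-c (x/s)^δ) x⁻¹ dx`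
(inequality in `[0,∞]`). -/
theorem stmt10 (δ c : ℝ) (hδ : 0 < δ) (hc : 0 < c) :
    ∃ C : ℝ, 0 < C ∧ ∀ s : ℝ, 0 < s →
      ∑' M : ℕ, ENNReal.ofReal
          (Real.exp (-c * ((2:ℝ) ^ (M + 1) / (((M:ℝ) + 1) ^ 2 * s)) ^ δ)) ≤
        3 + ENNReal.ofReal C *
          ∫⁻ x in Set.Ioi ((8:ℝ)/9), ENNReal.ofReal (Real.exp (-c * (x/s) ^ δ) * x⁻¹) := by
  have hL : 0 < Real.log (9 / 8) := Real.log_pos (by norm_num)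
  refine ⟨(Real.log (9 / 8))⁻¹, inv_pos.mpr hL, fun s hs => ?_⟩
  set φ : ℝ → ℝ≥0∞ := fun t => ENNReal.ofReal (Real.exp (-c * (t / s) ^ δ))
  have hφ : AntitoneOn φ (Ioi 0) := fun t ht u hu htu =>
    ENNReal.ofReal_le_ofReal (antitoneOn_exp_neg_mul_div_rpow hc.le hs.le hδ.le ht hu htu)
  have htail : ENNReal.ofReal (Real.log (9 / 8)) * ∑' k, φ (twoPowDivSq (k + 4)) ≤
      ∫⁻ t in Ioi (8 / 9), φ t * ENNReal.ofReal t⁻¹ := by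
    rw [show (8 / 9 : ℝ) = twoPowDivSq 3 by norm_num [twoPowDivSq]]
    exact ofReal_log_mul_tsum_le_setLIntegral_Ioi (x := fun n => twoPowDivSq (n + 3)) hφ
      (by norm_num [twoPowDivSq]) (by norm_num)
      fun n => nine_div_eight_mul_twoPowDivSq_le (by omega)
  have hsummand : ∀ M : ℕ,
      ENNReal.ofReal (Real.exp (-c * ((2:ℝ) ^ (M + 1) / (((M:ℝ) + 1) ^ 2 * s)) ^ δ)) =
        φ (twoPowDivSq (M + 1)) := by
    simp only [φ, twoPowDivSq, div_div, Nat.cast_add, Nat.cast_one, implies_true]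
  have hintegrand : ∀ t, ENNReal.ofReal (Real.exp (-c * (t / s) ^ δ) * t⁻¹) =
      φ t * ENNReal.ofReal t⁻¹ := fun t => ENNReal.ofReal_mul (Real.exp_nonneg _)
  simp only [hsummand, hintegrand]
  rw [← ENNReal.summable.sum_add_tsum_nat_add' (k := 3), ENNReal.ofReal_inv_of_pos hL,
    ← ENNReal.div_eq_inv_mul]
  refine add_le_add ((Finset.sum_le_card_nsmul _ _ 1 fun n _ =>
    ofReal_exp_neg_mul_rpow_le_one δ hc.le (div_nonneg (twoPowDivSq_nonneg _) hs.le)).trans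
      (by simp)) ?_
  rw [ENNReal.le_div_iff_mul_le (Or.inl (ENNReal.ofReal_pos.mpr hL).ne')
    (Or.inl ENNReal.ofReal_ne_top), mul_comm]
  exact htail
end

section
/- Let a, b, c, d, ã, b̃, c̃, d̃ ∈ [0,1]. Then (a·ã − b·b̃)·(c·c̃ − d·d̃) ≤ (a − b)·(c − d) + 2 − ã·d̃ − b̃·c̃. -/
/-- The algebraic inequality from Lemma 3.1 (the variances lemma) of the paper: for eight numbers
in `[0,1]`, `(a ã - b b̃)(c c̃ - d d̃) ≤ (a - b)(c - d) + 2 - ã d̃ - b̃ c̃`. -/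
theorem stmt11 (a b c d ta tb tc td : ℝ)
    (ha : a ∈ Set.Icc (0:ℝ) 1) (hb : b ∈ Set.Icc (0:ℝ) 1)
    (hc : c ∈ Set.Icc (0:ℝ) 1) (hd : d ∈ Set.Icc (0:ℝ) 1)
    (hta : ta ∈ Set.Icc (0:ℝ) 1) (htb : tb ∈ Set.Icc (0:ℝ) 1)
    (htc : tc ∈ Set.Icc (0:ℝ) 1) (htd : td ∈ Set.Icc (0:ℝ) 1) :
    (a * ta - b * tb) * (c * tc - d * td) ≤ (a - b) * (c - d) + 2 - ta * td - tb * tc := by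
  obtain ⟨ha0, ha1⟩ := ha
  obtain ⟨hb0, hb1⟩ := hb
  obtain ⟨hc0, hc1⟩ := hc
  obtain ⟨hd0, hd1⟩ := hd
  obtain ⟨hta0, hta1⟩ := hta
  obtain ⟨htb0, htb1⟩ := htb
  obtain ⟨htc0, htc1⟩ := htc
  obtain ⟨htd0, htd1⟩ := htd
  have h1 : a * c * (ta * tc - 1) ≤ 0 :=
    mul_nonpos_of_nonneg_of_nonpos (mul_nonneg ha0 hc0)
      (by nlinarith)
  have h2 : a * d * (1 - ta * td) ≤ 1 - ta * td :=
    mul_le_of_le_one_left (by nlinarith) (by nlinarith)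
  have h3 : c * b * (1 - tc * tb) ≤ 1 - tb * tc := by
    have := mul_le_of_le_one_left (show (0:ℝ) ≤ 1 - tc * tb by nlinarith)
      (show c * b ≤ 1 by nlinarith)
    linarith [this, mul_comm tb tc]
    
  have h4 : b * d * (tb * td - 1) ≤ 0 :=
    mul_nonpos_of_nonneg_of_nonpos (mul_nonneg hb0 hd0)
      (by nlinarith)
  nlinarith [h1, h2, h3, h4]
end
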